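/- Gap characterization for DeqEmpty: a differentiated queue history h has a projection h' whose 'last' rule is R_DeqEmpty and which is not linearizable with respect to the matching set of R_DeqEmpty, if and only if there exists a DeqEmpty operation o in h such that there is no gap on o. -/

import Mathlib

attribute [local instance] Classical.propDecidable

/-- Operations of a queue history: enqueues and dequeues of data values
(natural numbers), and empty-dequeues (tagged by an identifier). -/
inductive QOp : Type
  | enq (d : ℕ)
  | deq (d : ℕ)
  | deqEmpty (i : ℕ)
deriving DecidableEq

/-- A differentiated queue history: a finite set of operations (each operation
occurs at most once, so each data value is used at most once) together with a
happens-before relation that is a strict interval order. -/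
structure QHistory where
  ops : Finset QOp
  hb : QOp → QOp → Prop
  hb_irrefl : ∀ o, ¬ hb o o
  hb_trans : ∀ a b c, hb a b → hb b c → hb a c
  interval : ∀ a b c d, hb a b → hb c d → hb a d ∨ hb c b

/-- `u` is a linearization of the history `h`: it enumerates exactly the
operations of `h` in an order extending happens-before. -/
def QHistory.Linearizes (h : QHistory) (u : List QOp) : Prop :=
  u.Nodup ∧ (∀ o, o ∈ u ↔ o ∈ h.ops) ∧ u.Pairwise (fun a b => ¬ h.hb b a)

/-- `h` is linearizable with respect to the set of sequential words `M`. -/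
def LinearizableSet (h : QHistory) (M : List QOp → Prop) : Prop :=
  ∃ u, M u ∧ h.Linearizes u

def noDeq (u : List QOp) : Prop := ∀ d, QOp.deq d ∉ u

def noUnmatchedEnq (u : List QOp) : Prop := ∀ d, QOp.enq d ∈ u → QOp.deq d ∈ u

/-- Matching set of the rule R_EnqDeq with witness `x`:
words `Enq(x) · u1 · Deq(x) · u2` where `u1` contains no dequeue. -/
def MatchEnqDeqW (x : ℕ) (w : List QOp) : Prop :=
  ∃ u1 u2, w = QOp.enq x :: u1 ++ QOp.deq x :: u2 ∧ noDeq u1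

/-- Matching set of R_EnqDeq (some witness). -/
def MatchEnqDeq (w : List QOp) : Prop := ∃ x, MatchEnqDeqW x w

/-- Data values occurring in a history. -/
def QHistory.dom (h : QHistory) : Set ℕ :=
  {d | QOp.enq d ∈ h.ops ∨ QOp.deq d ∈ h.ops}

def QOp.keep (D K : Set ℕ) : QOp → Prop
  | .enq d => d ∈ D
  | .deq d => d ∈ D
  | .deqEmpty i => i ∈ K

/-- Projection of a history onto the data values in `D`, keeping the
empty-dequeue operations with identifiers in `K`. -/
noncomputable def QHistory.proj (h : QHistory) (D K : Set ℕ) : QHistory :=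
  { h with ops := h.ops.filter (QOp.keep D K) }

/-- Remove all operations on the data value `x`. -/
noncomputable def QHistory.removeVal (h : QHistory) (x : ℕ) : QHistory :=
  { h with ops := h.ops.filter (fun o => o ≠ QOp.enq x ∧ o ≠ QOp.deq x) }

/-- Data values occurring in a sequential word. -/
def wordVals (u : List QOp) : Set ℕ := {d | QOp.enq d ∈ u ∨ QOp.deq d ∈ u}

/-- `h` has a gap on operation `o`: the other operations can be partitioned
into `L ⊎ R` where `L` has no unmatched enqueue, no operation of `R`
happens-before an operation of `L` or before `o`, and no operation of `L`
happens-after `o`. -/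
def Gap (h : QHistory) (o : QOp) : Prop :=
  ∃ L R : Finset QOp,
    L ∪ R = h.ops.erase o ∧ Disjoint L R ∧
    (∀ d, QOp.enq d ∈ L → QOp.deq d ∈ L) ∧
    (∀ a ∈ R, ∀ b ∈ L, ¬ h.hb a b) ∧
    (∀ a ∈ R, ¬ h.hb a o) ∧
    (∀ b ∈ L, ¬ h.hb o b)

/-- Matching set of R_DeqEmpty: words `u · DeqEmpty · v` where `u` has no
unmatched enqueue. -/
def MatchDeqEmpty (w : List QOp) : Prop :=
  ∃ u i v, w = u ++ QOp.deqEmpty i :: v ∧ noUnmatchedEnq u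

/-- `last(h') = R_DeqEmpty`: the history contains an empty dequeue. -/
def lastDeqEmpty (h : QHistory) : Prop := ∃ i, QOp.deqEmpty i ∈ h.ops

/-- The operation `o` is covered by the values `f 0, ..., f (Fin.last m)`
(equivalently, the left-right constraint graph of `o` has a cycle through `o`):
`Enq(f 0)` happens-before `o`, each `Enq(f (i+1))` happens-before
`Deq(f i)`, and `o` happens-before `Deq(f m)` or `Deq(f m)` is absent. -/
def Covered (h : QHistory) (o : QOp) : Prop :=
  ∃ m : ℕ, ∃ f : Fin (m + 1) → ℕ,
    (∀ i, f i ∈ h.dom) ∧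
    h.hb (QOp.enq (f 0)) o ∧
    (∀ i : Fin m, h.hb (QOp.enq (f i.succ)) (QOp.deq (f i.castSucc))) ∧
    (h.hb o (QOp.deq (f (Fin.last m))) ∨ QOp.deq (f (Fin.last m)) ∉ h.ops)

/-!
A linearization `u · DeqEmpty · v` of a history cuts its other operations into `u` and `v`,
and this cut is a gap on that `DeqEmpty`; conversely a gap `L ⊎ R` on `o` yields the
linearization `sort(L) · o · sort(R)`, whose prefix has no unmatched enqueue. Gaps restrict to
projections. In the other direction, a gap of the projection keeping all values and only the
empty dequeue `o` extends to `h`: the dropped empty dequeues that happen after `o` or after an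
operation of the right part go to the right, all others to the left.
-/

theorem Finset.exists_nodup_list_pairwise_not_rel {α : Type*} (r : α → α → Prop)
    [IsStrictOrder α r] (s : Finset α) :
    ∃ l : List α, l.Nodup ∧ (∀ x, x ∈ l ↔ x ∈ s) ∧
      l.Pairwise (fun a b => ¬ r b a) := by
  let := partialOrderOfSO r
  obtain ⟨t, ht, hle⟩ := extend_partialOrder (α := α) (· ≤ ·)
  refine ⟨s.sort t, s.sort_nodup t, fun _ => s.mem_sort t, ?_⟩
  refine ((s.pairwise_sort t).and (s.sort_nodup t)).imp fun ⟨hab, hne⟩ hba => hne ?_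
  exact antisymm hab (hle _ _ (Or.inr hba))

namespace QHistory

instance (h : QHistory) : IsStrictOrder QOp h.hb where
  irrefl := h.hb_irrefl
  trans := h.hb_trans

theorem exists_linearizes (h : QHistory) : ∃ u, h.Linearizes u :=
  Finset.exists_nodup_list_pairwise_not_rel h.hb h.ops

theorem linearizableSet_matchDeqEmpty_of_gap (h : QHistory) {i : ℕ}
    (hi : QOp.deqEmpty i ∈ h.ops) (hgap : Gap h (QOp.deqEmpty i)) :
    LinearizableSet h MatchDeqEmpty := by
  obtain ⟨L, R, hLR, hdisj, hmatch, hRL, hRo, hoL⟩ := hgap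
  obtain ⟨u, hu_nd, hu_mem, hu_pw⟩ := exists_linearizes { h with ops := L }
  obtain ⟨v, hv_nd, hv_mem, hv_pw⟩ := exists_linearizes { h with ops := R }
  have hL : ∀ x ∈ L, x ≠ QOp.deqEmpty i ∧ x ∈ h.ops := fun x hx =>
    Finset.mem_erase.1 (hLR ▸ Finset.mem_union_left R hx)
  have hR : ∀ x ∈ R, x ≠ QOp.deqEmpty i ∧ x ∈ h.ops := fun x hx =>
    Finset.mem_erase.1 (hLR ▸ Finset.mem_union_right L hx)
  refine ⟨u ++ QOp.deqEmpty i :: v,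
    ⟨u, i, v, rfl, fun d hd => (hu_mem _).2 (hmatch d ((hu_mem _).1 hd))⟩, ?_, ?_, ?_⟩
  · refine List.nodup_append.2 ⟨hu_nd, List.nodup_cons.2 ⟨fun ho => ?_, hv_nd⟩, ?_⟩
    · exact (hR _ ((hv_mem _).1 ho)).1 rfl
    · rintro a ha b hb rfl
      rcases List.mem_cons.1 hb with rfl | hb
      · exact (hL _ ((hu_mem _).1 ha)).1 rfl
      · exact Finset.disjoint_left.1 hdisj ((hu_mem _).1 ha) ((hv_mem _).1 hb)
  · intro x
    by_cases hx : x = QOp.deqEmpty i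
    · subst hx
      simpa using hi
    · have hx' : x ∈ L ∪ R ↔ x ∈ h.ops := by rw [hLR, Finset.mem_erase, and_iff_right hx]
      simp only [List.mem_append, List.mem_cons, hu_mem, hv_mem, hx, false_or, ← hx',
        Finset.mem_union]
  · refine List.pairwise_append.2 ⟨hu_pw, List.pairwise_cons.2 ⟨?_, hv_pw⟩, ?_⟩
    · exact fun b hb => hRo b ((hv_mem _).1 hb)
    · intro a ha b hb
      rcases List.mem_cons.1 hb with rfl | hb
      · exact hoL a ((hu_mem _).1 ha)
      · exact hRL b ((hv_mem _).1 hb) a ((hu_mem _).1 ha)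

theorem gap_of_linearizes (h : QHistory) {u v : List QOp} {o : QOp}
    (hlin : h.Linearizes (u ++ o :: v)) (hu : noUnmatchedEnq u) : Gap h o := by
  obtain ⟨hnd, hmem, hpw⟩ := hlin
  rw [List.nodup_append, List.nodup_cons] at hnd
  rw [List.pairwise_append, List.pairwise_cons] at hpw
  obtain ⟨-, ⟨hov, -⟩, hdisj⟩ := hnd
  obtain ⟨-, ⟨hvo, -⟩, hcross⟩ := hpw
  have hou : o ∉ u := fun ho => hdisj o ho o List.mem_cons_self rfl
  refine ⟨u.toFinset, v.toFinset, ?_, ?_, fun d => by simpa using hu d, ?_, ?_, ?_⟩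
  · ext x
    simp only [Finset.mem_union, List.mem_toFinset, Finset.mem_erase, ← hmem, List.mem_append,
      List.mem_cons]
    constructor
    · rintro (hx | hx)
      · exact ⟨fun hxo => hou (hxo ▸ hx), .inl hx⟩
      · exact ⟨fun hxo => hov (hxo ▸ hx), .inr (.inr hx)⟩
    · rintro ⟨hxo, hx | hx | hx⟩
      exacts [.inl hx, absurd hx hxo, .inr hx]
  · exact Finset.disjoint_left.2 fun a ha ha' =>
      hdisj a (List.mem_toFinset.1 ha) a (List.mem_cons_of_mem _ (List.mem_toFinset.1 ha')) rfl
  · exact fun a ha b hb => hcross b (List.mem_toFinset.1 hb) a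
      (List.mem_cons_of_mem _ (List.mem_toFinset.1 ha))
  · exact fun a ha => hvo a (List.mem_toFinset.1 ha)
  · exact fun b hb => hcross b (List.mem_toFinset.1 hb) o List.mem_cons_self

end QHistory

theorem Gap.proj {h : QHistory} {o : QOp} (hgap : Gap h o) (D K : Set ℕ) :
    Gap (h.proj D K) o := by
  obtain ⟨L, R, hLR, hdisj, hmatch, hRL, hRo, hoL⟩ := hgap
  refine ⟨L.filter (QOp.keep D K), R.filter (QOp.keep D K), ?_,
    hdisj.mono (Finset.filter_subset _ _) (Finset.filter_subset _ _), ?_,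
    fun a ha b hb => hRL a (Finset.mem_filter.1 ha).1 b (Finset.mem_filter.1 hb).1,
    fun a ha => hRo a (Finset.mem_filter.1 ha).1,
    fun b hb => hoL b (Finset.mem_filter.1 hb).1⟩
  · rw [← Finset.filter_union, hLR]
    exact Finset.filter_erase _ _ _
  · intro d hd
    exact Finset.mem_filter.2 ⟨hmatch d (Finset.mem_filter.1 hd).1, (Finset.mem_filter.1 hd).2⟩

theorem Gap.of_proj_dom {h : QHistory} {K : Set ℕ} {o : QOp} (hgap : Gap (h.proj h.dom K) o) :
    Gap h o := by
  obtain ⟨L, R, hLR, hdisj, hmatch, hRL, hRo, hoL⟩ := hgap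
  let Above (a : QOp) : Prop := ∃ r ∈ insert o R, r = a ∨ h.hb r a
  have hL : ∀ b ∈ L, b ∈ (h.ops.erase o).filter fun a => ¬ Above a := by
    intro b hb
    have hb' := hLR ▸ Finset.mem_union_left R hb
    refine Finset.mem_filter.2 ⟨Finset.erase_subset_erase o (Finset.filter_subset _ _) hb', ?_⟩
    rintro ⟨r, hr, hrb | hrb⟩
    · obtain rfl | hr := Finset.mem_insert.1 hr
      exacts [(Finset.mem_erase.1 hb').1 hrb.symm, Finset.disjoint_left.1 hdisj (hrb ▸ hb) hr]
    · obtain rfl | hr := Finset.mem_insert.1 hr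
      exacts [hoL b hb hrb, hRL r hr b hb hrb]
  refine ⟨(h.ops.erase o).filter fun a => ¬ Above a, (h.ops.erase o).filter Above,
    by rw [Finset.union_comm]; exact Finset.filter_union_filter_not_eq (p := Above) _,
    (Finset.disjoint_filter_filter_not _ _ Above).symm, ?_, ?_, ?_, ?_⟩
  · intro d hd
    obtain ⟨hd_ops, hd_left⟩ := Finset.mem_filter.1 hd
    obtain ⟨hd_ne, hd_ops⟩ := Finset.mem_erase.1 hd_ops
    have hd_proj : QOp.enq d ∈ L ∪ R := by
      rw [hLR]
      exact Finset.mem_erase.2 ⟨hd_ne, Finset.mem_filter.2 ⟨hd_ops, .inl hd_ops⟩⟩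
    obtain hdL | hdR := Finset.mem_union.1 hd_proj
    · exact hL _ (hmatch d hdL)
    · exact absurd ⟨_, Finset.mem_insert_of_mem hdR, .inl rfl⟩ hd_left
  · rintro a ha b hb hab
    obtain ⟨r, hr, rfl | hra⟩ := (Finset.mem_filter.1 ha).2
    exacts [(Finset.mem_filter.1 hb).2 ⟨r, hr, .inr hab⟩,
      (Finset.mem_filter.1 hb).2 ⟨r, hr, .inr (h.hb_trans _ _ _ hra hab)⟩]
  · rintro a ha hao
    obtain ⟨r, hr, hra⟩ := (Finset.mem_filter.1 ha).2
    have hro : h.hb r o := hra.elim (· ▸ hao) (h.hb_trans _ _ _ · hao)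
    obtain rfl | hr := Finset.mem_insert.1 hr
    exacts [h.hb_irrefl r hro, hRo r hr hro]
  · exact fun b hb hob => (Finset.mem_filter.1 hb).2 ⟨o, Finset.mem_insert_self o R, .inr hob⟩

/-- gap characterization: a differentiated queue history `h` has
a projection `h'` with `last(h') = R_DeqEmpty` that is not linearizable with
respect to the matching set of R_DeqEmpty iff some `DeqEmpty` operation of `h`
has no gap on it. -/
theorem deqEmpty_gap_characterization (h : QHistory) :
    (∃ D K : Set ℕ, D ⊆ h.dom ∧ lastDeqEmpty (h.proj D K) ∧
        ¬ LinearizableSet (h.proj D K) MatchDeqEmpty) ↔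
    (∃ i, QOp.deqEmpty i ∈ h.ops ∧ ¬ Gap h (QOp.deqEmpty i)) := by
  constructor
  · rintro ⟨D, K, -, ⟨i, hi⟩, hnl⟩
    exact ⟨i, (Finset.mem_filter.1 hi).1,
      fun hgap => hnl ((h.proj D K).linearizableSet_matchDeqEmpty_of_gap hi (hgap.proj D K))⟩
  · rintro ⟨i, hi, hng⟩
    refine ⟨h.dom, {i}, subset_rfl, ⟨i, Finset.mem_filter.2 ⟨hi, rfl⟩⟩, ?_⟩
    rintro ⟨_, ⟨u, j, v, rfl, hu⟩, hlin⟩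
    have hj : QOp.deqEmpty j ∈ (h.proj h.dom {i}).ops := (hlin.2.1 _).1 (by simp)
    obtain rfl : j = i := (Finset.mem_filter.1 hj).2
    exact hng ((h.proj h.dom {j}).gap_of_linearizes hlin hu).of_proj_dom
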